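/- For every n ≥ 2 there exists a square of order T_n in the infinite Tribonacci word T, and also a square of order T_n + T_{n-1}. -/

import Mathlib

/-- The Tribonacci morphism: 0 → 01, 1 → 02, 2 → 0. -/
def tribMap (c : ℕ) : List ℕ := if c = 0 then [0,1] else if c = 1 then [0,2] else [0]

/-- Iterates of the Tribonacci morphism on the word `0`. -/
def tribIter : ℕ → List ℕ
  | 0 => [0]
  | k+1 => (tribIter k).flatMap tribMap

/-- The infinite Tribonacci word, the fixed point starting with 0 of 0→01, 1→02, 2→0. -/
def tribWord (n : ℕ) : ℕ := (tribIter (n+1)).getD n 0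

/-- The Tribonacci numbers. -/
def trib : ℕ → ℕ
  | 0 => 0
  | 1 => 1
  | 2 => 1
  | n+3 => trib (n+2) + trib (n+1) + trib n

/-!
Write `A k` for `tribIter k`, so that `A (k + 3) = A (k + 2) A (k + 1) A k` and `|A k| = T (k + 2)`.
Since `A k` and `A (k + 1) A k` are prefixes of `A (k + 2)`, expanding
`A (k + 4) = A (k + 2) A (k + 1) A k · A (k + 2) · A (k + 1)` exhibits both the square `A k A k`
and the square `(A (k + 1) A k)²` in a prefix of the Tribonacci word; their orders are
`T (k + 2)` and `T (k + 3) + T (k + 2)`. The one order not covered, `T 2 + T 1`, equals `T 3`.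
-/

def HasSquare {α : Type*} (w : ℕ → α) (m : ℕ) : Prop :=
  ∃ i, ∀ t < m, w (i + t) = w (i + m + t)

theorem hasSquare_of_append_prefix {α : Type*} {w : ℕ → α} {L u x : List α}
    (hL : ∀ j (hj : j < L.length), w j = L[j]) (h : u ++ x ++ x <+: L) :
    HasSquare w x.length := by
  have hlen := h.length_le
  simp only [List.length_append] at hlen
  refine ⟨u.length, fun t ht => ?_⟩
  rw [hL _ (by omega), hL _ (by omega), ← h.getElem (by simp; omega),
    ← h.getElem (by simp; omega)]
  simp only [List.getElem_append, List.length_append]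
  simp [ht]

theorem one_le_trib : ∀ k, 1 ≤ trib (k + 1)
  | 0 | 1 => le_rfl
  | k + 2 => by
    show 1 ≤ trib (k + 2) + trib (k + 1) + trib k
    have := one_le_trib k
    omega

theorem lt_trib_add_three (k : ℕ) : k < trib (k + 3) := by
  induction k with
  | zero => decide
  | succ k ih =>
    show k + 1 < trib (k + 3) + trib (k + 2) + trib (k + 1)
    have := one_le_trib k
    omega

theorem tribIter_add_three (k : ℕ) :
    tribIter (k + 3) = tribIter (k + 2) ++ tribIter (k + 1) ++ tribIter k := by
  induction k with
  | zero => decide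
  | succ k ih =>
    conv_lhs => rw [tribIter, ih, List.flatMap_append, List.flatMap_append]
    rfl

theorem tribIter_add_four (k : ℕ) :
    tribIter (k + 4) = tribIter (k + 2) ++ tribIter (k + 1) ++ tribIter k ++ tribIter (k + 2)
      ++ tribIter (k + 1) := by
  rw [tribIter_add_three, tribIter_add_three]

theorem length_tribIter (k : ℕ) : (tribIter k).length = trib (k + 2) := by
  induction k using Nat.strong_induction_on with
  | _ k ih =>
    match k with
    | 0 | 1 | 2 => rfl
    | k + 3 =>
      rw [tribIter_add_three, List.length_append, List.length_append, ih (k + 2) (by omega),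
        ih (k + 1) (by omega), ih k (by omega)]
      rfl

theorem tribIter_prefix_succ (k : ℕ) : tribIter k <+: tribIter (k + 1) := by
  induction k with
  | zero => exact ⟨[1], rfl⟩
  | succ k ih => exact ih.flatMap tribMap

theorem tribIter_prefix_of_le {k m : ℕ} (h : k ≤ m) : tribIter k <+: tribIter m := by
  induction m, h using Nat.le_induction with
  | base => exact List.prefix_rfl
  | succ m _ ih => exact ih.trans (tribIter_prefix_succ m)

theorem tribIter_append_prefix (k : ℕ) :
    tribIter (k + 1) ++ tribIter k <+: tribIter (k + 2) := by
  cases k with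
  | zero => exact ⟨[2], rfl⟩
  | succ k =>
    rw [tribIter_add_three]
    exact List.prefix_append _ _

theorem tribWord_eq_getElem {m j : ℕ} (hj : j < (tribIter m).length) :
    tribWord j = (tribIter m)[j] := by
  have hj' : j < (tribIter (j + 1)).length := by
    rw [length_tribIter]
    exact lt_trib_add_three j
  rw [tribWord, List.getD_eq_getElem _ _ hj']
  rcases Nat.le_total m (j + 1) with hm | hm
  · exact ((tribIter_prefix_of_le hm).getElem hj).symm
  · exact (tribIter_prefix_of_le hm).getElem hj'

theorem hasSquare_tribWord_of_prefix {m : ℕ} {u x : List ℕ} (h : u ++ x ++ x <+: tribIter m) :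
    HasSquare tribWord x.length :=
  hasSquare_of_append_prefix (fun _ hj => tribWord_eq_getElem hj) h

theorem hasSquare_tribWord_trib (k : ℕ) : HasSquare tribWord (trib (k + 2)) := by
  rw [← length_tribIter]
  apply hasSquare_tribWord_of_prefix (m := k + 4) (u := tribIter (k + 2) ++ tribIter (k + 1))
  rw [tribIter_add_four]
  exact ((List.prefix_append_right_inj _).2 (tribIter_prefix_of_le (by omega))).trans
    (List.prefix_append _ _)

theorem hasSquare_tribWord_trib_add_trib (k : ℕ) :
    HasSquare tribWord (trib (k + 3) + trib (k + 2)) := by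
  rw [← length_tribIter, ← length_tribIter, ← List.length_append]
  apply hasSquare_tribWord_of_prefix (m := k + 4) (u := tribIter (k + 2))
  rw [tribIter_add_four, ← List.append_assoc (tribIter (k + 2))]
  exact ((List.prefix_append_right_inj _).2 (tribIter_append_prefix k)).trans
    (List.prefix_append _ _)

/-- For every `n ≥ 2` the Tribonacci word contains squares of order `T_n` and of
order `T_n + T_{n-1}`. -/
theorem tribWord_squares_exist (n : ℕ) (hn : 2 ≤ n) :
    (∃ i, ∀ t < trib n, tribWord (i + t) = tribWord (i + trib n + t)) ∧
    (∃ i, ∀ t < trib n + trib (n - 1),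
        tribWord (i + t) = tribWord (i + (trib n + trib (n - 1)) + t)) := by
  obtain ⟨k, rfl⟩ := Nat.exists_eq_add_of_le' hn
  refine ⟨hasSquare_tribWord_trib k, ?_⟩
  cases k with
  | zero => exact hasSquare_tribWord_trib 1
  | succ k => exact hasSquare_tribWord_trib_add_trib k
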